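/- The image of GL(2,ℝ) under the homomorphism L equals ℝ⁺ · O⁺(2,1): a 3×3 real matrix M equals L(g) for some g ∈ GL(2,ℝ) if and only if M = c·M′ for some real c > 0 and some 3×3 real matrix M′ satisfying η(M′u) = η(u) for all u ∈ ℝ³ and M′₃₃ > 0 (i.e., M′ belongs to the orthochronous Lorentz group O⁺(2,1)). Moreover L(λI) = λ⁻² I for every λ ≠ 0, so L(ℝ×·I) = ℝ⁺·I. -/

import Mathlib

/-!
`Lmat g = congrMat g⁻¹`, where `congrMat k` is the matrix of `u ↦ φ⁻¹ (kᵀ φ(u) k)`; `congrMat`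
reverses products. Since `η = det ∘ φ`, `congrMat k` scales `η` by `(det k)²`, and its `(3,3)`
entry, half the sum of the squares of the entries of `k`, is at least `|det k|`. Hence
`congrMat k = |det k| • M` with `M ∈ O⁺(2,1)`.

Conversely, let `M ∈ O⁺(2,1)`. The column `v = M e₃` lies on the upper sheet of `η = 1`, and
congruence by `φ(v)^(-1/2)` (a boost) moves it back to `e₃`. The resulting Lorentz matrix fixes
`e₃`, so it is a rotation or a reflection of the `(x, y)`-plane, which is `congrMat k` for a
rotation `k` by the half angle, possibly composed with `diag(1, -1)`. Positive scalars come from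
`congrMat (λ • k) = λ² • congrMat k`.
-/

open Matrix

noncomputable def phi (u : Fin 3 → ℝ) : Matrix (Fin 2) (Fin 2) ℝ :=
  !![u 2 + u 0, u 1; u 1, u 2 - u 0]

noncomputable def phiInv (σ : Matrix (Fin 2) (Fin 2) ℝ) : Fin 3 → ℝ :=
  ![(σ 0 0 - σ 1 1) / 2, σ 0 1, (σ 0 0 + σ 1 1) / 2]

noncomputable def Lmap (g : Matrix (Fin 2) (Fin 2) ℝ) (u : Fin 3 → ℝ) : Fin 3 → ℝ :=
  phiInv ((g⁻¹)ᵀ * phi u * g⁻¹)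

noncomputable def Lmat (g : Matrix (Fin 2) (Fin 2) ℝ) : Matrix (Fin 3) (Fin 3) ℝ :=
  Matrix.of fun i j => Lmap g (Pi.single j 1) i

noncomputable def eta (u : Fin 3 → ℝ) : ℝ := (u 2) ^ 2 - (u 0) ^ 2 - (u 1) ^ 2

noncomputable def congrMat (k : Matrix (Fin 2) (Fin 2) ℝ) : Matrix (Fin 3) (Fin 3) ℝ :=
  Matrix.of fun i j => phiInv (kᵀ * phi (Pi.single j 1) * k) i

lemma Lmat_eq_congrMat_inv (g : Matrix (Fin 2) (Fin 2) ℝ) : Lmat g = congrMat g⁻¹ := rfl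

lemma congrMat_eq (k : Matrix (Fin 2) (Fin 2) ℝ) :
    congrMat k =
      !![(k 0 0 ^ 2 - k 0 1 ^ 2 - k 1 0 ^ 2 + k 1 1 ^ 2) / 2, k 0 0 * k 1 0 - k 0 1 * k 1 1,
          (k 0 0 ^ 2 - k 0 1 ^ 2 + k 1 0 ^ 2 - k 1 1 ^ 2) / 2;
        k 0 0 * k 0 1 - k 1 0 * k 1 1, k 0 1 * k 1 0 + k 0 0 * k 1 1,
          k 0 0 * k 0 1 + k 1 0 * k 1 1;
        (k 0 0 ^ 2 + k 0 1 ^ 2 - k 1 0 ^ 2 - k 1 1 ^ 2) / 2, k 0 0 * k 1 0 + k 0 1 * k 1 1,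
          (k 0 0 ^ 2 + k 0 1 ^ 2 + k 1 0 ^ 2 + k 1 1 ^ 2) / 2] := by
  ext i j
  fin_cases i <;> fin_cases j <;>
    simp only [congrMat, phiInv, phi, mul_apply, transpose_apply, Fin.sum_univ_two, Pi.single_apply,
      Fin.reduceEq, ↓reduceIte, of_apply, cons_val', cons_val_zero,
      cons_val_one, cons_val, cons_val_fin_one, Fin.isValue, Fin.zero_eta, Fin.mk_one,
      Fin.reduceFinMk] <;>
    ring

lemma congrMat_mulVec (k : Matrix (Fin 2) (Fin 2) ℝ) (u : Fin 3 → ℝ) :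
    congrMat k *ᵥ u = phiInv (kᵀ * phi u * k) := by
  funext i
  fin_cases i <;>
    simp only [congrMat_eq, phiInv, phi, mulVec, dotProduct, mul_apply, transpose_apply,
      Fin.sum_univ_three, Fin.sum_univ_two, of_apply, cons_val', cons_val_zero,
      cons_val_one, cons_val, cons_val_fin_one, Fin.isValue, Fin.zero_eta, Fin.mk_one,
      Fin.reduceFinMk] <;>
    ring

lemma det_phi (u : Fin 3 → ℝ) : (phi u).det = eta u := by
  rw [phi, det_fin_two_of, eta]
  ring

lemma phi_phiInv {σ : Matrix (Fin 2) (Fin 2) ℝ} (hσ : σ.IsSymm) : phi (phiInv σ) = σ := by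
  ext i j
  fin_cases i <;> fin_cases j <;>
    simp only [phi, phiInv, of_apply, cons_val', cons_val_zero, cons_val_one, cons_val,
      cons_val_fin_one, Fin.isValue, Fin.zero_eta, Fin.mk_one]
  · ring
  · exact (hσ.apply 0 1).symm
  · ring

lemma isSymm_phi (u : Fin 3 → ℝ) : (phi u).IsSymm :=
  IsSymm.ext fun i j => by fin_cases i <;> fin_cases j <;> rfl

lemma eta_congrMat_mulVec (k : Matrix (Fin 2) (Fin 2) ℝ) (u : Fin 3 → ℝ) :
    eta (congrMat k *ᵥ u) = k.det ^ 2 * eta u := by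
  have hsymm : (kᵀ * phi u * k).IsSymm := by
    simp only [IsSymm, transpose_mul, transpose_transpose, (isSymm_phi u).eq, Matrix.mul_assoc]
  rw [congrMat_mulVec, ← det_phi, phi_phiInv hsymm, det_mul, det_mul, det_transpose, det_phi]
  ring

lemma congrMat_mul (k m : Matrix (Fin 2) (Fin 2) ℝ) :
    congrMat (k * m) = congrMat m * congrMat k := by
  ext i j
  fin_cases i <;> fin_cases j <;>
    simp only [congrMat_eq, mul_apply, Fin.sum_univ_three, Fin.sum_univ_two, of_apply, cons_val',
      cons_val_zero, cons_val_one, cons_val, cons_val_fin_one, Fin.isValue, Fin.zero_eta,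
      Fin.mk_one, Fin.reduceFinMk] <;>
    ring

lemma congrMat_smul (l : ℝ) (k : Matrix (Fin 2) (Fin 2) ℝ) :
    congrMat (l • k) = l ^ 2 • congrMat k := by
  ext i j
  fin_cases i <;> fin_cases j <;>
    simp only [congrMat_eq, Matrix.smul_apply, smul_eq_mul, of_apply, cons_val', cons_val_zero,
      cons_val_one, cons_val, cons_val_fin_one, Fin.isValue, Fin.zero_eta, Fin.mk_one,
      Fin.reduceFinMk] <;>
    ring

lemma congrMat_one : congrMat 1 = 1 := by
  ext i j
  fin_cases i <;> fin_cases j <;> simp [congrMat_eq, one_apply]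

lemma abs_det_le_congrMat_two_two (k : Matrix (Fin 2) (Fin 2) ℝ) :
    |k.det| ≤ congrMat k 2 2 := by
  simp only [congrMat_eq, det_fin_two, of_apply, cons_val', cons_val_one, cons_val,
    cons_val_fin_one]
  exact abs_le.2 ⟨by nlinarith [sq_nonneg (k 0 0 + k 1 1), sq_nonneg (k 0 1 - k 1 0)],
    by nlinarith [sq_nonneg (k 0 0 - k 1 1), sq_nonneg (k 0 1 + k 1 0)]⟩

lemma eta_smul (c : ℝ) (v : Fin 3 → ℝ) : eta (c • v) = c ^ 2 * eta v := by
  simp only [eta, Pi.smul_apply, smul_eq_mul]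
  ring

lemma exists_sq_sub_sq_eq_and_two_mul_eq {p s : ℝ} (h : p ^ 2 + s ^ 2 = 1) :
    ∃ α β : ℝ, α ^ 2 + β ^ 2 = 1 ∧ α ^ 2 - β ^ 2 = p ∧ 2 * α * β = s := by
  obtain ⟨z, hz⟩ := IsAlgClosed.exists_pow_nat_eq (⟨p, s⟩ : ℂ) two_pos
  have hre : z.re ^ 2 - z.im ^ 2 = p := by simpa [sq] using congrArg Complex.re hz
  have him : 2 * z.re * z.im = s := by
    have := congrArg Complex.im hz; simp only [sq, Complex.mul_im] at this; linarith
  refine ⟨z.re, z.im, ?_, hre, him⟩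
  have hsq : (z.re ^ 2 + z.im ^ 2) ^ 2 = 1 := by rw [← h, ← hre, ← him]; ring
  nlinarith [sq_nonneg z.re, sq_nonneg z.im]

lemma exists_congrMat_eq_rotation {p s : ℝ} (h : p ^ 2 + s ^ 2 = 1) :
    ∃ k : Matrix (Fin 2) (Fin 2) ℝ, IsUnit k ∧ congrMat k = !![p, -s, 0; s, p, 0; 0, 0, 1] := by
  obtain ⟨α, β, hαβ, rfl, rfl⟩ := exists_sq_sub_sq_eq_and_two_mul_eq h
  refine ⟨!![α, β; -β, α], ?_, ?_⟩
  · rw [isUnit_iff_isUnit_det, det_fin_two_of, isUnit_iff_ne_zero]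
    have hdet : α * α - β * -β = 1 := by linear_combination hαβ
    exact hdet ▸ one_ne_zero
  · rw [congrMat_eq]
    ext i j
    fin_cases i <;> fin_cases j <;>
      simp only [of_apply, cons_val', cons_val_zero, cons_val_one, cons_val, cons_val_fin_one,
        Fin.isValue, Fin.zero_eta, Fin.mk_one, Fin.reduceFinMk] <;>
      linarith

lemma exists_congrMat_eq_reflection {p s : ℝ} (h : p ^ 2 + s ^ 2 = 1) :
    ∃ k : Matrix (Fin 2) (Fin 2) ℝ, IsUnit k ∧ congrMat k = !![p, s, 0; s, -p, 0; 0, 0, 1] := by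
  obtain ⟨k, hk, hrot⟩ := exists_congrMat_eq_rotation h
  have hF : IsUnit !![(1 : ℝ), 0; 0, -1] := by
    rw [isUnit_iff_isUnit_det, det_fin_two_of, isUnit_iff_ne_zero]; norm_num
  refine ⟨!![1, 0; 0, -1] * k, hF.mul hk, ?_⟩
  rw [congrMat_mul, hrot, congrMat_eq]
  ext i j
  fin_cases i <;> fin_cases j <;> simp [mul_apply, Fin.sum_univ_three]

lemma eq_rotation_or_reflection_of_orthonormal {a b c d : ℝ} (h₁ : a ^ 2 + c ^ 2 = 1)
    (h₂ : b ^ 2 + d ^ 2 = 1) (h₃ : a * b + c * d = 0) :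
    (b = -c ∧ d = a) ∨ (b = c ∧ d = -a) := by
  have hdet : (a * d - b * c - 1) * (a * d - b * c + 1) = 0 := by
    linear_combination (b ^ 2 + d ^ 2) * h₁ + h₂ - (a * b + c * d) * h₃
  rcases mul_eq_zero.1 hdet with hE | hE
  · left
    exact ⟨by linear_combination (-b) * h₁ + a * h₃ - c * hE,
      by linear_combination (-d) * h₁ + c * h₃ + a * hE⟩
  · right
    exact ⟨by linear_combination (-b) * h₁ + a * h₃ - c * hE,
      by linear_combination (-d) * h₁ + c * h₃ + a * hE⟩

lemma exists_orthonormal_block_of_mulVec_eq {N : Matrix (Fin 3) (Fin 3) ℝ}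
    (hN : ∀ u, eta (N *ᵥ u) = eta u) (he : N *ᵥ ![0, 0, 1] = ![0, 0, 1]) :
    ∃ a b c d : ℝ, a ^ 2 + c ^ 2 = 1 ∧ b ^ 2 + d ^ 2 = 1 ∧ a * b + c * d = 0 ∧
      N = !![a, b, 0; c, d, 0; 0, 0, 1] := by
  have h02 : N 0 2 = 0 := by simpa [mulVec, dotProduct, Fin.sum_univ_three] using congrFun he 0
  have h12 : N 1 2 = 0 := by simpa [mulVec, dotProduct, Fin.sum_univ_three] using congrFun he 1
  have h22 : N 2 2 = 1 := by simpa [mulVec, dotProduct, Fin.sum_univ_three] using congrFun he 2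
  -- polarizing `η` on these vectors gives the Gram-matrix conditions on the columns of `N`
  have r1 := hN ![1, 0, 0]
  have r2 := hN ![0, 1, 0]
  have r3 := hN ![1, 1, 0]
  have r4 := hN ![1, 0, 1]
  have r5 := hN ![0, 1, 1]
  simp only [eta, mulVec, dotProduct, Fin.sum_univ_three, h02, h12, h22, cons_val_zero,
    cons_val_one, cons_val, Fin.isValue] at r1 r2 r3 r4 r5
  have h20 : N 2 0 = 0 := by linear_combination (r4 - r1) / 2
  have h21 : N 2 1 = 0 := by linear_combination (r5 - r2) / 2
  refine ⟨N 0 0, N 0 1, N 1 0, N 1 1, by linear_combination N 2 0 * h20 - r1,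
    by linear_combination N 2 1 * h21 - r2,
    by linear_combination (r1 + r2 - r3) / 2 + N 2 1 * h20, ?_⟩
  ext i j
  fin_cases i <;> fin_cases j <;> simp [h02, h12, h22, h20, h21]

lemma exists_congrMat_eq_of_mulVec_eq {N : Matrix (Fin 3) (Fin 3) ℝ}
    (hN : ∀ u, eta (N *ᵥ u) = eta u) (he : N *ᵥ ![0, 0, 1] = ![0, 0, 1]) :
    ∃ k : Matrix (Fin 2) (Fin 2) ℝ, IsUnit k ∧ congrMat k = N := by
  obtain ⟨a, b, c, d, h₁, h₂, h₃, rfl⟩ := exists_orthonormal_block_of_mulVec_eq hN he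
  rcases eq_rotation_or_reflection_of_orthonormal h₁ h₂ h₃ with ⟨rfl, rfl⟩ | ⟨rfl, rfl⟩
  · exact exists_congrMat_eq_rotation h₁
  · exact exists_congrMat_eq_reflection h₁

lemma exists_congrMat_mulVec_eq {v : Fin 3 → ℝ} (hv : eta v = 1) (hv2 : 0 < v 2) :
    ∃ h : Matrix (Fin 2) (Fin 2) ℝ, h.det = 1 ∧ congrMat h *ᵥ v = ![0, 0, 1] := by
  have htr : 0 < 2 * v 2 + 2 := by linarith
  have hv' : v 2 ^ 2 - v 0 ^ 2 - v 1 ^ 2 = 1 := hv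
  have hdet : (adjugate (phi v) + 1).det = 2 * v 2 + 2 := by
    simp only [adjugate_fin_two, phi, one_fin_two, Matrix.add_apply, det_fin_two, of_apply,
      cons_val', cons_val_zero, cons_val_one, cons_val_fin_one, Fin.isValue]
    linear_combination hv'
  have hmulVec : congrMat (adjugate (phi v) + 1) *ᵥ v = (2 * v 2 + 2) • ![0, 0, 1] := by
    rw [congrMat_mulVec]
    funext i
    fin_cases i <;>
      simp only [adjugate_fin_two, phi, phiInv, one_fin_two, mul_apply, Matrix.add_apply,
        transpose_apply, Fin.sum_univ_two, Pi.smul_apply, smul_eq_mul, of_apply, cons_val',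
        cons_val_zero, cons_val_one, cons_val, cons_val_fin_one, Fin.isValue, Fin.zero_eta,
        Fin.mk_one, Fin.reduceFinMk]
    · linear_combination (-v 0) * hv'
    · linear_combination (-v 1) * hv'
    · linear_combination (v 2 + 2) * hv'
  -- `P = phi v` has `det P = 1`, so `P + P⁻¹ = (tr P) • 1` and `A = P⁻¹ + 1 = adjugate P + 1`
  -- satisfies `Aᵀ P A = (tr P + 2) • 1`: the boost is `A` normalised, i.e. `P ^ (-1/2)`.
  refine ⟨(√(2 * v 2 + 2))⁻¹ • (adjugate (phi v) + 1), ?_, ?_⟩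
  · rw [det_smul, hdet, Fintype.card_fin, inv_pow, Real.sq_sqrt htr.le, inv_mul_cancel₀ htr.ne']
  · rw [congrMat_smul, smul_mulVec, hmulVec, smul_smul, inv_pow, Real.sq_sqrt htr.le,
      inv_mul_cancel₀ htr.ne', one_smul]

lemma exists_congrMat_eq_of_orthochronous {M : Matrix (Fin 3) (Fin 3) ℝ}
    (hM : ∀ u, eta (M *ᵥ u) = eta u) (hM22 : 0 < M 2 2) :
    ∃ k : Matrix (Fin 2) (Fin 2) ℝ, IsUnit k ∧ congrMat k = M := by
  have hcol : (M *ᵥ ![0, 0, 1]) 2 = M 2 2 := by simp [mulVec, dotProduct, Fin.sum_univ_three]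
  obtain ⟨h, hdet, hboost⟩ :=
    exists_congrMat_mulVec_eq (by rw [hM]; simp [eta]) (hcol ▸ hM22)
  obtain ⟨k, hk, hkN⟩ := exists_congrMat_eq_of_mulVec_eq (N := congrMat h * M)
    (fun u => by rw [← mulVec_mulVec, eta_congrMat_mulVec, hdet, hM, one_pow, one_mul])
    (by rw [← mulVec_mulVec, hboost])
  have hh : IsUnit h.det := hdet ▸ isUnit_one
  refine ⟨k * h⁻¹, hk.mul (isUnit_nonsing_inv_iff.2 ((isUnit_iff_isUnit_det h).2 hh)), ?_⟩
  rw [congrMat_mul, hkN, ← Matrix.mul_assoc, ← congrMat_mul, mul_nonsing_inv h hh, congrMat_one,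
    Matrix.one_mul]

lemma exists_smul_orthochronous_eq_congrMat {k : Matrix (Fin 2) (Fin 2) ℝ} (hk : IsUnit k) :
    ∃ (c : ℝ) (M : Matrix (Fin 3) (Fin 3) ℝ), 0 < c ∧
      (∀ u, eta (M *ᵥ u) = eta u) ∧ 0 < M 2 2 ∧ congrMat k = c • M := by
  have hdet : k.det ≠ 0 := ((isUnit_iff_isUnit_det k).1 hk).ne_zero
  have hd : 0 < |k.det| := abs_pos.2 hdet
  refine ⟨|k.det|, |k.det|⁻¹ • congrMat k, hd, fun u => ?_, ?_, ?_⟩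
  · rw [smul_mulVec, eta_smul, eta_congrMat_mulVec, inv_pow, sq_abs, ← mul_assoc,
      inv_mul_cancel₀ (pow_ne_zero 2 hdet), one_mul]
  · exact mul_pos (inv_pos.2 hd) (hd.trans_le (abs_det_le_congrMat_two_two k))
  · rw [smul_smul, mul_inv_cancel₀ hd.ne', one_smul]

lemma Lmat_nonsing_inv {k : Matrix (Fin 2) (Fin 2) ℝ} (hk : IsUnit k) :
    Lmat k⁻¹ = congrMat k := by
  rw [Lmat_eq_congrMat_inv, nonsing_inv_nonsing_inv k ((isUnit_iff_isUnit_det k).1 hk)]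

lemma Lmat_smul_one {l : ℝ} (hl : l ≠ 0) :
    Lmat (l • (1 : Matrix (Fin 2) (Fin 2) ℝ)) = l⁻¹ ^ 2 • (1 : Matrix (Fin 3) (Fin 3) ℝ) := by
  have hinv : (l • (1 : Matrix (Fin 2) (Fin 2) ℝ))⁻¹ = l⁻¹ • 1 :=
    inv_eq_right_inv (by rw [smul_mul_smul_comm, mul_inv_cancel₀ hl, one_mul, one_smul])
  rw [Lmat_eq_congrMat_inv, hinv, congrMat_smul, congrMat_one]

/-- the image of GL(2,ℝ) under L equals ℝ⁺·O⁺(2,1); moreover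
L(λI) = λ⁻²I for λ ≠ 0, so L(ℝ×·I) = ℝ⁺·I. -/
theorem stmt6 :
    (∀ M : Matrix (Fin 3) (Fin 3) ℝ,
      (∃ g : Matrix (Fin 2) (Fin 2) ℝ, IsUnit g ∧ M = Lmat g) ↔
      (∃ (c : ℝ) (M' : Matrix (Fin 3) (Fin 3) ℝ), 0 < c ∧
        (∀ u : Fin 3 → ℝ, eta (M' *ᵥ u) = eta u) ∧ 0 < M' 2 2 ∧ M = c • M')) ∧
    (∀ l : ℝ, l ≠ 0 →
      Lmat (l • (1 : Matrix (Fin 2) (Fin 2) ℝ)) = (l⁻¹) ^ 2 • (1 : Matrix (Fin 3) (Fin 3) ℝ)) ∧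
    {M : Matrix (Fin 3) (Fin 3) ℝ | ∃ l : ℝ, l ≠ 0 ∧ M = Lmat (l • 1)} =
      {M : Matrix (Fin 3) (Fin 3) ℝ | ∃ c : ℝ, 0 < c ∧ M = c • 1} := by
  refine ⟨fun M => ⟨?_, ?_⟩, fun l => Lmat_smul_one, ?_⟩
  · rintro ⟨g, hg, rfl⟩
    rw [Lmat_eq_congrMat_inv]
    exact exists_smul_orthochronous_eq_congrMat (isUnit_nonsing_inv_iff.2 hg)
  · rintro ⟨c, M', hc, hM', hM'22, rfl⟩
    obtain ⟨k, hk, rfl⟩ := exists_congrMat_eq_of_orthochronous hM' hM'22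
    have hck : IsUnit (√c • k) := by
      rw [isUnit_iff_isUnit_det, det_smul, isUnit_iff_ne_zero]
      exact mul_ne_zero (by positivity) ((isUnit_iff_isUnit_det k).1 hk).ne_zero
    refine ⟨(√c • k)⁻¹, isUnit_nonsing_inv_iff.2 hck, ?_⟩
    rw [Lmat_nonsing_inv hck, congrMat_smul, Real.sq_sqrt hc.le]
  · ext M
    constructor
    · rintro ⟨l, hl, rfl⟩
      exact ⟨l⁻¹ ^ 2, by positivity, Lmat_smul_one hl⟩
    · rintro ⟨c, hc, rfl⟩
      refine ⟨(√c)⁻¹, by positivity, ?_⟩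
      rw [Lmat_smul_one (by positivity), inv_inv, Real.sq_sqrt hc.le]
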